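/- arXiv:2406.07320 — 2 statements merged into one kernel-verified Lean document; each statement's English description precedes it below -/
import Mathlib

section
/- (Key identity for Proposition 2.) Let Z_1,…,Z_N be independent square-integrable real random variables with means μ_i = E[Z_i] and variances v_i = Var(Z_i), and let {1,…,N} be partitioned into H strata D_1,…,D_H with |D_h| = N_h ≥ 2. Then E[Σ_{h=1}^H (N_h/N) S²_{Z_h}] = (1/N) Σ_{i=1}^N v_i + Σ_{h=1}^H (N_h/N) S²_{μ,h}, where S²_{Z_h} = (1/(N_h−1)) Σ_{i∈D_h} (Z_i − θ̂_{D_h})² with θ̂_{D_h} = (1/N_h) Σ_{i∈D_h} Z_i, and S²_{μ,h} = (1/(N_h−1)) Σ_{i∈D_h} (μ_i − μ̄_{D_h})² with μ̄_{D_h} = (1/N_h) Σ_{i∈D_h} μ_i. Consequently, the expected design variance of the Horvitz–Thompson estimator under stratified simple random sampling with proportional allocation equals ((1−f)/(nN)) Σ_{i=1}^N v_i + ((1−f)/n) Σ_{h=1}^H (N_h/N) S²_{μ,h}. -/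
/-!
Expanding the square, `∑ (Zᵢ - Z̄)² = ∑ Zᵢ² - (∑ Zᵢ)² / m` on a stratum of size `m`. Taking
expectations with `E[X²] = Var X + (E X)²` and `Var (∑ Zᵢ) = ∑ vᵢ` (independence) gives
`(1 - 1/m) ∑ vᵢ + ∑ (μᵢ - μ̄)²`. After dividing by `m - 1` and weighting by `N_h / N`, the
variance part of stratum `h` is `(1/N) ∑_{i ∈ D_h} vᵢ`, and these add up to `(1/N) ∑ vᵢ` because
the strata partition the population. The design-variance identity is this one times `(1 - f)/n`.
-/

open MeasureTheory ProbabilityTheory Finset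

/-- Both `S²_{Z_h}` (with `x = (Z · ω)`) and `S²_{μ,h}` (with `x = μ`) are instances. -/
noncomputable def sampleVariance {ι : Type*} (s : Finset ι) (x : ι → ℝ) : ℝ :=
  1 / ((#s : ℝ) - 1) * ∑ i ∈ s, (x i - 1 / (#s : ℝ) * ∑ j ∈ s, x j) ^ 2

lemma sum_sq_sub_mean {ι : Type*} (s : Finset ι) (x : ι → ℝ) :
    ∑ i ∈ s, (x i - 1 / (#s : ℝ) * ∑ j ∈ s, x j) ^ 2
      = ∑ i ∈ s, x i ^ 2 - 1 / (#s : ℝ) * (∑ i ∈ s, x i) ^ 2 := by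
  rcases s.eq_empty_or_nonempty with rfl | hs
  · simp
  have hcard : (#s : ℝ) ≠ 0 := by exact_mod_cast hs.card_ne_zero
  simp only [sub_sq, sum_add_distrib, sum_sub_distrib, ← sum_mul, ← mul_sum, sum_const,
    nsmul_eq_mul]
  field_simp
  ring

section Expectation

variable {Ω ι : Type*} [MeasurableSpace Ω] {P : Measure Ω} {s : Finset ι} {Z : ι → Ω → ℝ}

lemma integral_sq_eq_variance_add_sq [IsProbabilityMeasure P] {X : Ω → ℝ} (hX : MemLp X 2 P) :
    ∫ ω, X ω ^ 2 ∂P = variance X P + (∫ ω, X ω ∂P) ^ 2 := by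
  rw [variance_eq_sub hX]
  simp

lemma integral_sum_sq_sub_mean [IsProbabilityMeasure P] (hL2 : ∀ i ∈ s, MemLp (Z i) 2 P)
    (hindep : Set.Pairwise ↑s fun i j => IndepFun (Z i) (Z j) P) :
    ∫ ω, ∑ i ∈ s, (Z i ω - 1 / (#s : ℝ) * ∑ j ∈ s, Z j ω) ^ 2 ∂P
      = (1 - 1 / (#s : ℝ)) * ∑ i ∈ s, variance (Z i) P
        + ∑ i ∈ s, (∫ ω, Z i ω ∂P - 1 / (#s : ℝ) * ∑ j ∈ s, ∫ ω, Z j ω ∂P) ^ 2 := by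
  have hsum_sq : ∫ ω, (∑ i ∈ s, Z i ω) ^ 2 ∂P
      = ∑ i ∈ s, variance (Z i) P + (∑ i ∈ s, ∫ ω, Z i ω ∂P) ^ 2 := by
    have hsum := integral_sq_eq_variance_add_sq (memLp_finsetSum' s hL2)
    simp only [Finset.sum_apply] at hsum
    rw [hsum, IndepFun.variance_sum hL2 hindep,
      integral_finsetSum s fun i hi => (hL2 i hi).integrable one_le_two]
  simp only [sum_sq_sub_mean]
  rw [integral_sub (integrable_finsetSum s fun i hi => (hL2 i hi).integrable_sq)
      ((memLp_finsetSum s hL2).integrable_sq.const_mul _), integral_const_mul,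
    integral_finsetSum s fun i hi => (hL2 i hi).integrable_sq, hsum_sq,
    sum_congr rfl fun i hi => integral_sq_eq_variance_add_sq (hL2 i hi), sum_add_distrib]
  ring

lemma integrable_sampleVariance [IsFiniteMeasure P] (hL2 : ∀ i ∈ s, MemLp (Z i) 2 P) :
    Integrable (fun ω => sampleVariance s (Z · ω)) P := by
  refine (integrable_finsetSum s fun i hi => ?_).const_mul _
  exact ((hL2 i hi).sub ((memLp_finsetSum s hL2).const_mul _)).integrable_sq

lemma integral_sampleVariance [IsProbabilityMeasure P] (hL2 : ∀ i ∈ s, MemLp (Z i) 2 P)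
    (hindep : Set.Pairwise ↑s fun i j => IndepFun (Z i) (Z j) P) (hs : 2 ≤ #s) :
    ∫ ω, sampleVariance s (Z · ω) ∂P
      = 1 / (#s : ℝ) * ∑ i ∈ s, variance (Z i) P + sampleVariance s (fun i => ∫ ω, Z i ω ∂P) := by
  have hs' : (2 : ℝ) ≤ #s := by exact_mod_cast hs
  have hcard : (#s : ℝ) ≠ 0 := by positivity
  have hcard' : (#s : ℝ) - 1 ≠ 0 := by linarith
  unfold sampleVariance
  rw [integral_const_mul, integral_sum_sq_sub_mean hL2 hindep]
  field_simp

end Expectation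

theorem expected_within_strata_variance_general
    {Ω : Type*} [MeasurableSpace Ω] (P : Measure Ω) [IsProbabilityMeasure P]
    (N H n : ℕ)
    (Z : Fin N → Ω → ℝ)
    (hL2 : ∀ i, MemLp (Z i) 2 P)
    (hindep : iIndepFun Z P)
    (st : Fin N → Fin H)
    (hNh : ∀ h, 2 ≤ (univ.filter (fun i => st i = h)).card) :
    (let Dh : Fin H → Finset (Fin N) := fun h => univ.filter (fun i => st i = h)
     let Nh : Fin H → ℕ := fun h => (Dh h).card
     -- realized within-stratum sample variance
     let S2Z : Fin H → Ω → ℝ := fun h ω =>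
       (1 / ((Nh h : ℝ) - 1)) *
         ∑ i ∈ Dh h, (Z i ω - (1 / (Nh h : ℝ)) * ∑ j ∈ Dh h, Z j ω) ^ 2
     let μZ : Fin N → ℝ := fun i => ∫ ω, Z i ω ∂P
     let v : Fin N → ℝ := fun i => variance (Z i) P
     -- within-stratum variance of the means
     let S2μ : Fin H → ℝ := fun h =>
       (1 / ((Nh h : ℝ) - 1)) *
         ∑ i ∈ Dh h, (μZ i - (1 / (Nh h : ℝ)) * ∑ j ∈ Dh h, μZ j) ^ 2
     let f : ℝ := (n : ℝ) / N
     (∫ ω, (∑ h, ((Nh h : ℝ) / N) * S2Z h ω) ∂P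
        = (1 / (N : ℝ)) * ∑ i, v i + ∑ h, ((Nh h : ℝ) / N) * S2μ h)
     ∧ ((1 - f) / (n : ℝ)) * ∫ ω, (∑ h, ((Nh h : ℝ) / N) * S2Z h ω) ∂P
         = ((1 - f) / ((n : ℝ) * N)) * ∑ i, v i
           + ((1 - f) / (n : ℝ)) * ∑ h, ((Nh h : ℝ) / N) * S2μ h) := by
  intro Dh Nh S2Z μZ v S2μ f
  have hstratum (h : Fin H) :
      ∫ ω, (Nh h : ℝ) / N * sampleVariance (Dh h) (Z · ω) ∂P
        = 1 / (N : ℝ) * ∑ i ∈ Dh h, v i + (Nh h : ℝ) / N * sampleVariance (Dh h) μZ := by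
    have hcard : (Nh h : ℝ) ≠ 0 := by exact_mod_cast (zero_lt_two.trans_le (hNh h)).ne'
    have hweight : (Nh h : ℝ) / N * (1 / Nh h) = 1 / N := by field_simp
    rw [integral_const_mul, integral_sampleVariance (fun i _ => hL2 i)
      (fun i _ j _ hij => hindep.indepFun hij) (hNh h), mul_add, ← mul_assoc, hweight]
  have hexpectation : ∫ ω, ∑ h, (Nh h : ℝ) / N * S2Z h ω ∂P
      = 1 / (N : ℝ) * ∑ i, v i + ∑ h, (Nh h : ℝ) / N * S2μ h := by
    change ∫ ω, ∑ h, (Nh h : ℝ) / N * sampleVariance (Dh h) (Z · ω) ∂P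
      = 1 / (N : ℝ) * ∑ i, v i + ∑ h, (Nh h : ℝ) / N * sampleVariance (Dh h) μZ
    rw [integral_finsetSum _ fun h _ => (integrable_sampleVariance fun i _ => hL2 i).const_mul _,
      sum_congr rfl fun h _ => hstratum h, sum_add_distrib, ← mul_sum,
      sum_fiberwise_of_maps_to fun i _ => mem_univ (st i)]
  exact ⟨hexpectation, by rw [hexpectation]; ring⟩

/-- key identity for Proposition 2: For independent square-integrable
random variables `Z_1,…,Z_N` and a stratification into strata of size ≥ 2,
`E[∑_h (N_h/N) S²_{Z_h}] = (1/N) ∑ᵢ vᵢ + ∑_h (N_h/N) S²_{μ,h}`. Consequently, the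
expected design variance of the Horvitz–Thompson estimator under stratified simple
random sampling with proportional allocation equals
`((1-f)/(nN)) ∑ᵢ vᵢ + ((1-f)/n) ∑_h (N_h/N) S²_{μ,h}`. -/
theorem expected_within_strata_variance
    {Ω : Type*} [MeasurableSpace Ω] (P : Measure Ω) [IsProbabilityMeasure P]
    (N H n : ℕ) (hn : 1 ≤ n) (hnN : n ≤ N)
    (Z : Fin N → Ω → ℝ)
    (hmeas : ∀ i, Measurable (Z i))
    (hL2 : ∀ i, MemLp (Z i) 2 P)
    (hindep : iIndepFun Z P)
    (st : Fin N → Fin H)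
    (hNh : ∀ h, 2 ≤ (univ.filter (fun i => st i = h)).card) :
    (let Dh : Fin H → Finset (Fin N) := fun h => univ.filter (fun i => st i = h)
     let Nh : Fin H → ℕ := fun h => (Dh h).card
     -- realized within-stratum sample variance
     let S2Z : Fin H → Ω → ℝ := fun h ω =>
       (1 / ((Nh h : ℝ) - 1)) *
         ∑ i ∈ Dh h, (Z i ω - (1 / (Nh h : ℝ)) * ∑ j ∈ Dh h, Z j ω) ^ 2
     let μZ : Fin N → ℝ := fun i => ∫ ω, Z i ω ∂P
     let v : Fin N → ℝ := fun i => variance (Z i) P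
     -- within-stratum variance of the means
     let S2μ : Fin H → ℝ := fun h =>
       (1 / ((Nh h : ℝ) - 1)) *
         ∑ i ∈ Dh h, (μZ i - (1 / (Nh h : ℝ)) * ∑ j ∈ Dh h, μZ j) ^ 2
     let f : ℝ := (n : ℝ) / N
     (∫ ω, (∑ h, ((Nh h : ℝ) / N) * S2Z h ω) ∂P
        = (1 / (N : ℝ)) * ∑ i, v i + ∑ h, ((Nh h : ℝ) / N) * S2μ h)
     ∧ ((1 - f) / (n : ℝ)) * ∫ ω, (∑ h, ((Nh h : ℝ) / N) * S2Z h ω) ∂P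
         = ((1 - f) / ((n : ℝ) * N)) * ∑ i, v i
           + ((1 - f) / (n : ℝ)) * ∑ h, ((Nh h : ℝ) / N) * S2μ h) :=
  expected_within_strata_variance_general P N H n Z hL2 hindep st hNh
end

section
/- (Proposition 3.) Let (X_1,Z_1),…,(X_N,Z_N) (2 ≤ n < N) be i.i.d. random pairs with values in a measurable space 𝒳 times ℝ, with Z_1 square-integrable, and let g be a fixed measurable version of x ↦ E[Z_1 | X_1 = x]; use the proxies Ẑ_i = g(X_i). For a uniformly drawn n-element subset S of {1,…,N} (independent of the data), let Var_SRS(θ̂_HT) = ((1−f)/n)·(1/(N−1)) Σ_i (Z_i − θ̂_D)² and Var_SRS(θ̂_DF) = ((1−f)/n)·(1/(N−1)) Σ_i ((Z_i − Ẑ_i) − (θ̂_D − Z̄̂))² denote the design variances of the Horvitz–Thompson and difference estimators given the data, with f = n/N, θ̂_D = (1/N) Σ_i Z_i, Z̄̂ = (1/N) Σ_i Ẑ_i. Then E[Var_SRS(θ̂_DF)] · Var(Z_1) = E[Var_SRS(θ̂_HT)] · E[(Z_1 − g(X_1))²]; equivalently, if Var(Z_1) > 0, the ratio of the expected MSE of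 the difference estimator to that of the Horvitz–Thompson estimator under simple random sampling equals E[Var(Z_1 | X_1)] / Var(Z_1). -/
open MeasureTheory ProbabilityTheory Finset

/-!
Both design variances are `(1 - f)/n` times the sample variance of the population values, and
for i.i.d. data the sample variance is unbiased: its expectation is the common variance. For
the Horvitz–Thompson estimator that is `Var(Z₁)`; for the difference estimator it is the
variance of the residual `Z₁ - g(X₁)`, which has mean zero because `g(X₁)` is a version of
`E[Z₁ | X₁]`, so that its variance is `E[(Z₁ - g(X₁))²]`.
-/

lemma sum_sq_sub_mean_eq {ι : Type*} [Fintype ι] (a : ι → ℝ) (m : ℝ) :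
    ∑ i, (a i - (1 / (Fintype.card ι : ℝ)) * ∑ j, a j) ^ 2
      = ∑ i, (a i - m) ^ 2 - (1 / (Fintype.card ι : ℝ)) * (∑ i, (a i - m)) ^ 2 := by
  rcases isEmpty_or_nonempty ι with _ | _
  · simp
  have hN : (Fintype.card ι : ℝ) ≠ 0 := by positivity
  simp only [sub_sq, sum_add_distrib, sum_sub_distrib, ← mul_sum, ← sum_mul, sum_const,
    card_univ, nsmul_eq_mul]
  field_simp
  ring

section

variable {Ω : Type*} [MeasurableSpace Ω] {μ : Measure Ω} [IsFiniteMeasure μ]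
  {ι : Type*} [Fintype ι] {W : ι → Ω → ℝ}

lemma integral_sum_sq_sub_mean_s16 {m : ℝ} (hW : ∀ i, MemLp (W i) 2 μ)
    (hindep : Pairwise fun i j => IndepFun (W i) (W j) μ) (hmean : ∀ i, μ[W i] = m) :
    ∫ ω, ∑ i, (W i ω - (1 / (Fintype.card ι : ℝ)) * ∑ j, W j ω) ^ 2 ∂μ
      = (1 - 1 / (Fintype.card ι : ℝ)) * ∑ i, Var[W i; μ] := by
  have hcentered : ∀ i, MemLp (fun ω => W i ω - m) 2 μ := fun i => (hW i).sub (memLp_const m)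
  have hsum : MemLp (fun ω => ∑ i, (W i ω - m)) 2 μ := memLp_finsetSum _ fun i _ => hcentered i
  have hvar : ∀ i, ∫ ω, (W i ω - m) ^ 2 ∂μ = Var[W i; μ] := fun i => by
    rw [variance_eq_integral (hW i).aemeasurable, hmean]
  have hvar_sum : ∫ ω, (∑ i, (W i ω - m)) ^ 2 ∂μ = Var[∑ i, W i; μ] := by
    have hmean_sum : μ[∑ i, W i] = Fintype.card ι * m := by
      simp [integral_finsetSum _ fun i _ => (hW i).integrable one_le_two, hmean]
    rw [variance_eq_integral (memLp_finsetSum' _ fun i _ => hW i).aemeasurable, hmean_sum]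
    simp only [Finset.sum_apply, sum_sub_distrib, sum_const, card_univ, nsmul_eq_mul]
  simp_rw [sum_sq_sub_mean_eq _ m]
  rw [integral_sub (integrable_finsetSum _ fun i _ => (hcentered i).integrable_sq)
      (hsum.integrable_sq.const_mul _), integral_finsetSum _ fun i _ => (hcentered i).integrable_sq,
    integral_const_mul, hvar_sum,
    IndepFun.variance_sum (fun i _ => hW i) fun i _ j _ hij => hindep hij]
  simp only [hvar]
  ring

lemma integral_sum_sq_sub_mean_of_identDistrib {i₀ : ι} (hW : MemLp (W i₀) 2 μ)
    (hindep : Pairwise fun i j => IndepFun (W i) (W j) μ)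
    (hident : ∀ i, IdentDistrib (W i) (W i₀) μ μ) :
    ∫ ω, ∑ i, (W i ω - (1 / (Fintype.card ι : ℝ)) * ∑ j, W j ω) ^ 2 ∂μ
      = ((Fintype.card ι : ℝ) - 1) * Var[W i₀; μ] := by
  have : Nonempty ι := ⟨i₀⟩
  have hN : (Fintype.card ι : ℝ) ≠ 0 := by positivity
  rw [integral_sum_sq_sub_mean_s16 (fun i => (hident i).symm.memLp_snd hW) hindep
    fun i => (hident i).integral_eq]
  simp only [fun i => (hident i).variance_eq, sum_const, card_univ, nsmul_eq_mul]
  field_simp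

end

theorem df_vs_ht_expected_mse_ratio_general
    {Ω 𝒳 : Type*} [MeasurableSpace Ω] [MeasurableSpace 𝒳]
    (P : Measure Ω) [IsProbabilityMeasure P]
    (N n : ℕ) [NeZero N]
    (X : Fin N → Ω → 𝒳) (Z : Fin N → Ω → ℝ)
    (hX : ∀ i, Measurable (X i))
    (hL2 : MemLp (Z 0) 2 P)
    (hindep : iIndepFun (fun i ω => (X i ω, Z i ω)) P)
    (hident : ∀ i, IdentDistrib (fun ω => (X i ω, Z i ω)) (fun ω => (X 0 ω, Z 0 ω)) P P)
    (g : 𝒳 → ℝ) (hg : Measurable g)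
    (hcond : (fun ω => g (X 0 ω))
        =ᵐ[P] P[Z 0 | MeasurableSpace.comap (X 0) inferInstance]) :
    (let f : ℝ := (n : ℝ) / N
     let θD : Ω → ℝ := fun ω => (1 / (N : ℝ)) * ∑ i, Z i ω
     let Zhatbar : Ω → ℝ := fun ω => (1 / (N : ℝ)) * ∑ i, g (X i ω)
     -- design variance of the Horvitz–Thompson estimator given the data
     let VHT : Ω → ℝ := fun ω =>
       ((1 - f) / n) * ((1 / ((N : ℝ) - 1)) * ∑ i, (Z i ω - θD ω) ^ 2)
     -- design variance of the difference estimator given the data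
     let VDF : Ω → ℝ := fun ω =>
       ((1 - f) / n) * ((1 / ((N : ℝ) - 1)) *
         ∑ i, ((Z i ω - g (X i ω)) - (θD ω - Zhatbar ω)) ^ 2)
     (∫ ω, VDF ω ∂P) * variance (Z 0) P
       = (∫ ω, VHT ω ∂P) * ∫ ω, (Z 0 ω - g (X 0 ω)) ^ 2 ∂P) := by
  intro f θD Zhatbar VHT VDF
  have hres : Measurable fun p : 𝒳 × ℝ => p.2 - g p.1 := measurable_snd.sub (hg.comp measurable_fst)
  have hgX : MemLp (fun ω => g (X 0 ω)) 2 P :=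
    (hL2.condExp (m := MeasurableSpace.comap (X 0) inferInstance) one_le_two).ae_eq hcond.symm
  have hres_mean : ∫ ω, (Z 0 ω - g (X 0 ω)) ∂P = 0 := by
    rw [integral_sub (hL2.integrable one_le_two) (hgX.integrable one_le_two),
      integral_congr_ae hcond, integral_condExp (hX 0).comap_le, sub_self]
  have hHT : ∫ ω, ∑ i, (Z i ω - θD ω) ^ 2 ∂P = ((N : ℝ) - 1) * Var[Z 0; P] := by
    have := integral_sum_sq_sub_mean_of_identDistrib hL2
      (fun i j hij => (hindep.indepFun hij).comp measurable_snd measurable_snd)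
      fun i => (hident i).comp measurable_snd
    rwa [Fintype.card_fin] at this
  have hDF : ∫ ω, ∑ i, ((Z i ω - g (X i ω)) - (θD ω - Zhatbar ω)) ^ 2 ∂P
      = ((N : ℝ) - 1) * ∫ ω, (Z 0 ω - g (X 0 ω)) ^ 2 ∂P := by
    have hmean_diff : ∀ ω, θD ω - Zhatbar ω = (1 / (N : ℝ)) * ∑ i, (Z i ω - g (X i ω)) :=
      fun ω => by simp only [θD, Zhatbar, ← mul_sub, ← sum_sub_distrib]
    have hres_var : Var[fun ω => Z 0 ω - g (X 0 ω); P] = ∫ ω, (Z 0 ω - g (X 0 ω)) ^ 2 ∂P :=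
      variance_of_integral_eq_zero (hL2.sub hgX).aemeasurable hres_mean
    have := integral_sum_sq_sub_mean_of_identDistrib (W := fun i ω => Z i ω - g (X i ω))
      (hL2.sub hgX) (fun i j hij => (hindep.indepFun hij).comp hres hres)
      fun i => (hident i).comp hres
    rw [Fintype.card_fin, hres_var] at this
    simp_rw [hmean_diff]
    exact this
  simp only [VDF, VHT, integral_const_mul, hHT, hDF]
  ring

/-- Proposition 3: For i.i.d. pairs `(Xᵢ, Zᵢ)` and proxies
`Ẑᵢ = g(Xᵢ)` with `g` a version of `x ↦ E[Z₁ | X₁ = x]`, the expected design variances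
under simple random sampling of the difference and Horvitz–Thompson estimators satisfy
`E[Var_SRS(θ̂_DF)] · Var(Z₁) = E[Var_SRS(θ̂_HT)] · E[(Z₁ - g(X₁))²]`, i.e. their ratio
equals `E[Var(Z₁|X₁)]/Var(Z₁)`. -/
theorem df_vs_ht_expected_mse_ratio
    {Ω 𝒳 : Type*} [MeasurableSpace Ω] [MeasurableSpace 𝒳]
    (P : Measure Ω) [IsProbabilityMeasure P]
    (N n : ℕ) [NeZero N] (hn : 2 ≤ n) (hnN : n < N)
    (X : Fin N → Ω → 𝒳) (Z : Fin N → Ω → ℝ)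
    (hX : ∀ i, Measurable (X i)) (hZ : ∀ i, Measurable (Z i))
    (hL2 : MemLp (Z 0) 2 P)
    (hindep : iIndepFun (fun i ω => (X i ω, Z i ω)) P)
    (hident : ∀ i, IdentDistrib (fun ω => (X i ω, Z i ω)) (fun ω => (X 0 ω, Z 0 ω)) P P)
    (g : 𝒳 → ℝ) (hg : Measurable g)
    (hcond : (fun ω => g (X 0 ω))
        =ᵐ[P] P[Z 0 | MeasurableSpace.comap (X 0) inferInstance]) :
    (let f : ℝ := (n : ℝ) / N
     let θD : Ω → ℝ := fun ω => (1 / (N : ℝ)) * ∑ i, Z i ω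
     let Zhatbar : Ω → ℝ := fun ω => (1 / (N : ℝ)) * ∑ i, g (X i ω)
     -- design variance of the Horvitz–Thompson estimator given the data
     let VHT : Ω → ℝ := fun ω =>
       ((1 - f) / n) * ((1 / ((N : ℝ) - 1)) * ∑ i, (Z i ω - θD ω) ^ 2)
     -- design variance of the difference estimator given the data
     let VDF : Ω → ℝ := fun ω =>
       ((1 - f) / n) * ((1 / ((N : ℝ) - 1)) *
         ∑ i, ((Z i ω - g (X i ω)) - (θD ω - Zhatbar ω)) ^ 2)
     (∫ ω, VDF ω ∂P) * variance (Z 0) P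
       = (∫ ω, VHT ω ∂P) * ∫ ω, (Z 0 ω - g (X 0 ω)) ^ 2 ∂P) :=
  df_vs_ht_expected_mse_ratio_general P N n X Z hX hL2 hindep hident g hg hcond
end
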